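/- The two-point boundary value problem (MFG TPBV) has a solution (X̄, s) on [0, T] if and only if Z_2 lies in the column space (range) of Z_1. -/

import Mathlib

/-!
Writing `y = (X̄, s)`, the TPBV problem is the linear system `y' = 𝔸(t) y + f` with
`f = (0, Q η)`, together with the conditions `X̄(0) = x₀` and `s(T) + Q_f (Γ_f X̄(T) + η_f) = 0`.
Since `𝔸` is continuous, solutions of the system are unique (Gronwall), so `Φ(t, τ)` is invertible
with `Φ(t, τ) = Φ(t, 0) Φ(τ, 0)⁻¹`, and every initial value `y(0) = y₀` has exactly one solution,
`Φ(t, 0) (y₀ + ∫₀ᵗ Φ(τ, 0)⁻¹ f dτ)`. Its terminal value is `y(T) = Φ(T, 0) y₀ + ∫₀ᵀ Φ(T, τ) f dτ`,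
and for `y₀ = (x₀, w)` the terminal residual `s(T) + Q_f (Γ_f X̄(T) + η_f)` works out to
`Z₁ w + Z₂`. Hence a solution exists iff `Z₁ w + Z₂ = 0` for some `w`, i.e. `Z₂ = Z₁ (-w)`.
-/

open Matrix

/-- `M = B R⁻¹ Bᵀ`. -/
noncomputable def Mmat (n n1 : ℕ) (B : Matrix (Fin n) (Fin n1) ℝ)
    (R : Matrix (Fin n1) (Fin n1) ℝ) : Matrix (Fin n) (Fin n) ℝ :=
  B * R⁻¹ * Bᵀ

/-- The `2n × 2n` coefficient matrix `𝔸(t)` of the TPBV problem, where `L1 = Λ₁(t)`. -/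
noncomputable def bbA (n n1 : ℕ) (A G Q Γ : Matrix (Fin n) (Fin n) ℝ)
    (B : Matrix (Fin n) (Fin n1) ℝ) (R : Matrix (Fin n1) (Fin n1) ℝ)
    (L1 : Matrix (Fin n) (Fin n) ℝ) :
    Matrix (Fin n ⊕ Fin n) (Fin n ⊕ Fin n) ℝ :=
  Matrix.fromBlocks (A - Mmat n n1 B R * L1 + G) (-(Mmat n n1 B R))
    (Q * Γ - L1 * G) (-Aᵀ + L1 * Mmat n n1 B R)

/-- `Λ₁` solves the symmetric Riccati TVP on `[0,T]`. -/
def IsLam1Sol (n n1 : ℕ) (A Q Qf : Matrix (Fin n) (Fin n) ℝ)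
    (B : Matrix (Fin n) (Fin n1) ℝ) (R : Matrix (Fin n1) (Fin n1) ℝ) (T : ℝ)
    (Λ1 : ℝ → Matrix (Fin n) (Fin n) ℝ) : Prop :=
  (∀ t ∈ Set.Icc (0:ℝ) T, ∀ r c,
    HasDerivWithinAt (fun s => Λ1 s r c)
      ((Λ1 t * Mmat n n1 B R * Λ1 t - (Λ1 t * A + Aᵀ * Λ1 t) - Q) r c)
      (Set.Icc (0:ℝ) T) t)
  ∧ Λ1 T = Qf

/-- `Φ(t,τ)` is the fundamental solution matrix of `∂Φ/∂t = 𝔸(t) Φ`, `Φ(τ,τ) = I`,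
for `t, τ ∈ [0,T]`. -/
def IsFundSol (n n1 : ℕ) (A G Q Γ : Matrix (Fin n) (Fin n) ℝ)
    (B : Matrix (Fin n) (Fin n1) ℝ) (R : Matrix (Fin n1) (Fin n1) ℝ) (T : ℝ)
    (Λ1 : ℝ → Matrix (Fin n) (Fin n) ℝ)
    (Φ : ℝ → ℝ → Matrix (Fin n ⊕ Fin n) (Fin n ⊕ Fin n) ℝ) : Prop :=
  ∀ τ ∈ Set.Icc (0:ℝ) T, Φ τ τ = 1 ∧
    ∀ t ∈ Set.Icc (0:ℝ) T, ∀ p q,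
      HasDerivWithinAt (fun s => Φ s τ p q)
        ((bbA n n1 A G Q Γ B R (Λ1 t) * Φ t τ) p q) (Set.Icc (0:ℝ) T) t

/-- `Z₁ = Φ₂₂(T,0) + Q_f Γ_f Φ₁₂(T,0)`. -/
noncomputable def Z1mat (n : ℕ) (Qf Γf : Matrix (Fin n) (Fin n) ℝ) (T : ℝ)
    (Φ : ℝ → ℝ → Matrix (Fin n ⊕ Fin n) (Fin n ⊕ Fin n) ℝ) :
    Matrix (Fin n) (Fin n) ℝ :=
  (Φ T 0).toBlocks₂₂ + Qf * Γf * (Φ T 0).toBlocks₁₂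

/-- `Z₂ = [Φ₂₁(T,0) + Q_f Γ_f Φ₁₁(T,0)] x₀ + Q_f η_f
      + ∫₀ᵀ [Φ₂₂(T,τ) + Q_f Γ_f Φ₁₂(T,τ)] Q η dτ`. -/
noncomputable def Z2vec (n : ℕ) (Q Qf Γf : Matrix (Fin n) (Fin n) ℝ)
    (η ηf x0 : Fin n → ℝ) (T : ℝ)
    (Φ : ℝ → ℝ → Matrix (Fin n ⊕ Fin n) (Fin n ⊕ Fin n) ℝ)
    (j : Fin n) : ℝ :=
  (((Φ T 0).toBlocks₂₁ + Qf * Γf * (Φ T 0).toBlocks₁₁) *ᵥ x0) j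
    + (Qf *ᵥ ηf) j
    + ∫ τ in (0:ℝ)..T,
        ((((Φ T τ).toBlocks₂₂ + Qf * Γf * (Φ T τ).toBlocks₁₂) *ᵥ (Q *ᵥ η)) j)

/-- `(X̄, s)` solves the MFG TPBV problem on `[0,T]`. -/
def IsTPBVSol (n n1 : ℕ) (A G Q Qf Γ Γf : Matrix (Fin n) (Fin n) ℝ)
    (B : Matrix (Fin n) (Fin n1) ℝ) (R : Matrix (Fin n1) (Fin n1) ℝ)
    (η ηf x0 : Fin n → ℝ) (T : ℝ)
    (Λ1 : ℝ → Matrix (Fin n) (Fin n) ℝ) (X s : ℝ → Fin n → ℝ) : Prop :=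
  (∀ t ∈ Set.Icc (0:ℝ) T, ∀ j,
    HasDerivWithinAt (fun u => X u j)
      (((A - Mmat n n1 B R * Λ1 t + G) *ᵥ X t - Mmat n n1 B R *ᵥ s t) j)
      (Set.Icc (0:ℝ) T) t)
  ∧ (∀ t ∈ Set.Icc (0:ℝ) T, ∀ j,
    HasDerivWithinAt (fun u => s u j)
      ((-((Aᵀ - Λ1 t * Mmat n n1 B R) *ᵥ s t) - (Λ1 t * G) *ᵥ X t
        + Q *ᵥ (Γ *ᵥ X t + η)) j)
      (Set.Icc (0:ℝ) T) t)
  ∧ X 0 = x0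
  ∧ s T = -(Qf *ᵥ (Γf *ᵥ X T + ηf))

open Set MeasureTheory
open scoped NNReal

section LinearODE

variable {ι : Type*} [Fintype ι]

lemma Matrix.hasDerivWithinAt_mulVec {m : Type*} {M : ℝ → Matrix m ι ℝ} {M' : Matrix m ι ℝ}
    {w : ℝ → ι → ℝ} {w' : ι → ℝ} {s : Set ℝ} {t : ℝ}
    (hM : ∀ p q, HasDerivWithinAt (fun u => M u p q) (M' p q) s t)
    (hw : HasDerivWithinAt w w' s t) :
    HasDerivWithinAt (fun u => M u *ᵥ w u) (M' *ᵥ w t + M t *ᵥ w') s t := by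
  refine hasDerivWithinAt_pi.2 fun p => ?_
  simp only [mulVec, dotProduct, Pi.add_apply, ← Finset.sum_add_distrib]
  exact HasDerivWithinAt.fun_sum fun q _ => (hM p q).mul (hasDerivWithinAt_pi.1 hw q)

lemma Matrix.lipschitzWith_mulVec {m : Type*} [Fintype m] {A : Matrix m ι ℝ} {c : ℝ≥0}
    (hA : ∑ p, ∑ q, |A p q| ≤ c) : LipschitzWith c (A *ᵥ ·) := by
  refine LipschitzWith.of_dist_le_mul fun x y => (dist_pi_le_iff (by positivity)).2 fun p => ?_
  have hrow : ∑ q, |A p q| ≤ c :=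
    (Finset.single_le_sum (fun p _ => Finset.sum_nonneg fun q _ => abs_nonneg (A p q))
      (Finset.mem_univ p)).trans hA
  calc dist ((A *ᵥ x) p) ((A *ᵥ y) p) = |∑ q, A p q * (x q - y q)| := by
        simp [Real.dist_eq, mulVec, dotProduct, mul_sub]
    _ ≤ ∑ q, |A p q| * dist x y := by
        refine (Finset.abs_sum_le_sum_abs _ _).trans (Finset.sum_le_sum fun q _ => ?_)
        rw [abs_mul, ← Real.dist_eq]
        exact mul_le_mul_of_nonneg_left (dist_le_pi_dist x y q) (abs_nonneg _)
    _ ≤ c * dist x y := by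
        rw [← Finset.sum_mul]; exact mul_le_mul_of_nonneg_right hrow dist_nonneg

lemma IsCompact.exists_lipschitzWith_mulVec {A : ℝ → Matrix ι ι ℝ} {s : Set ℝ}
    (hs : IsCompact s) (hA : ContinuousOn A s) :
    ∃ K : ℝ≥0, ∀ t ∈ s, LipschitzWith K (A t *ᵥ ·) := by
  obtain ⟨C, hC⟩ := hs.exists_bound_of_continuousOn (f := fun t => ∑ p, ∑ q, |A t p q|)
    (by fun_prop)
  refine ⟨C.toNNReal, fun t ht => Matrix.lipschitzWith_mulVec ?_⟩
  exact (le_abs_self _).trans ((hC t ht).trans (Real.le_coe_toNNReal C))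

variable {𝔸 : ℝ → Matrix ι ι ℝ} {f : ι → ℝ} {a b : ℝ}

def IsLinearODESol (𝔸 : ℝ → Matrix ι ι ℝ) (f : ι → ℝ) (a b : ℝ) (y : ℝ → ι → ℝ) : Prop :=
  ∀ t ∈ Icc a b, HasDerivWithinAt y (𝔸 t *ᵥ y t + f) (Icc a b) t

lemma IsLinearODESol.hasDerivWithinAt_Iic {y : ℝ → ι → ℝ} {t : ℝ}
    (hy : IsLinearODESol 𝔸 f a b y) (ht : t ∈ Ioc a b) :
    HasDerivWithinAt y (𝔸 t *ᵥ y t + f) (Iic t) t :=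
  (hy t (Ioc_subset_Icc_self ht)).mono_of_mem_nhdsWithin (Icc_mem_nhdsLE_of_mem ht)

lemma IsLinearODESol.hasDerivWithinAt_Ici {y : ℝ → ι → ℝ} {t : ℝ}
    (hy : IsLinearODESol 𝔸 f a b y) (ht : t ∈ Ico a b) :
    HasDerivWithinAt y (𝔸 t *ᵥ y t + f) (Ici t) t :=
  (hy t (Ico_subset_Icc_self ht)).mono_of_mem_nhdsWithin (Icc_mem_nhdsGE_of_mem ht)

theorem IsLinearODESol.eqOn {y z : ℝ → ι → ℝ} {t₀ : ℝ} (h𝔸 : ContinuousOn 𝔸 (Icc a b))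
    (hy : IsLinearODESol 𝔸 f a b y) (hz : IsLinearODESol 𝔸 f a b z) (ht₀ : t₀ ∈ Icc a b)
    (h : y t₀ = z t₀) : EqOn y z (Icc a b) := by
  obtain ⟨K, hK⟩ := isCompact_Icc.exists_lipschitzWith_mulVec h𝔸
  have hv : ∀ t ∈ Icc a b, LipschitzOnWith K (fun x => 𝔸 t *ᵥ x + f) univ := fun t ht =>
    (by simpa using (hK t ht).add (LipschitzWith.const f) : LipschitzWith K _).lipschitzOnWith
  have hyc : ContinuousOn y (Icc a b) := fun t ht => (hy t ht).continuousWithinAt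
  have hzc : ContinuousOn z (Icc a b) := fun t ht => (hz t ht).continuousWithinAt
  intro t ht
  rcases le_total t t₀ with htt₀ | ht₀t
  · have hsub : Ioc a t₀ ⊆ Ioc a b := Ioc_subset_Ioc_right ht₀.2
    exact ODE_solution_unique_of_mem_Icc_left
      (fun u hu => hv u (Ioc_subset_Icc_self (hsub hu))) (hyc.mono (Icc_subset_Icc_right ht₀.2))
      (fun u hu => hy.hasDerivWithinAt_Iic (hsub hu)) (fun _ _ => mem_univ _)
      (hzc.mono (Icc_subset_Icc_right ht₀.2)) (fun u hu => hz.hasDerivWithinAt_Iic (hsub hu))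
      (fun _ _ => mem_univ _) h ⟨ht.1, htt₀⟩
  · have hsub : Ico t₀ b ⊆ Ico a b := Ico_subset_Ico_left ht₀.1
    exact ODE_solution_unique_of_mem_Icc_right
      (fun u hu => hv u (Ico_subset_Icc_self (hsub hu))) (hyc.mono (Icc_subset_Icc_left ht₀.1))
      (fun u hu => hy.hasDerivWithinAt_Ici (hsub hu)) (fun _ _ => mem_univ _)
      (hzc.mono (Icc_subset_Icc_left ht₀.1)) (fun u hu => hz.hasDerivWithinAt_Ici (hsub hu))
      (fun _ _ => mem_univ _) h ⟨ht₀t, ht.2⟩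

variable [DecidableEq ι]

def IsFundamentalMatrix (𝔸 : ℝ → Matrix ι ι ℝ) (a b : ℝ) (Φ : ℝ → ℝ → Matrix ι ι ℝ) : Prop :=
  ∀ τ ∈ Icc a b, Φ τ τ = 1 ∧ ∀ t ∈ Icc a b, ∀ p q,
    HasDerivWithinAt (fun s => Φ s τ p q) ((𝔸 t * Φ t τ) p q) (Icc a b) t

noncomputable def variationOfConstants (Φ : ℝ → ℝ → Matrix ι ι ℝ) (f : ι → ℝ) (a : ℝ)
    (y₀ : ι → ℝ) (t : ℝ) : ι → ℝ :=
  Φ t a *ᵥ (y₀ + ∫ τ in a..t, (Φ τ a)⁻¹ *ᵥ f)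

namespace IsFundamentalMatrix

variable {Φ : ℝ → ℝ → Matrix ι ι ℝ} {t τ σ : ℝ}

lemma isLinearODESol_mulVec (hΦ : IsFundamentalMatrix 𝔸 a b Φ) (hτ : τ ∈ Icc a b) (v : ι → ℝ) :
    IsLinearODESol 𝔸 0 a b (fun t => Φ t τ *ᵥ v) := fun t ht => by
  simpa [mulVec_mulVec] using
    Matrix.hasDerivWithinAt_mulVec ((hΦ τ hτ).2 t ht) (hasDerivWithinAt_const t _ v)

lemma continuousOn (hΦ : IsFundamentalMatrix 𝔸 a b Φ) (hτ : τ ∈ Icc a b) :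
    ContinuousOn (fun t => Φ t τ) (Icc a b) := fun t ht =>
  continuousWithinAt_pi.2 fun p => continuousWithinAt_pi.2 fun q =>
    ((hΦ τ hτ).2 t ht p q).continuousWithinAt

lemma isUnit (h𝔸 : ContinuousOn 𝔸 (Icc a b)) (hΦ : IsFundamentalMatrix 𝔸 a b Φ)
    (ht : t ∈ Icc a b) (hτ : τ ∈ Icc a b) : IsUnit (Φ t τ) := by
  refine mulVec_injective_iff_isUnit.1 fun v w hvw => ?_
  have := (hΦ.isLinearODESol_mulVec hτ v).eqOn h𝔸 (hΦ.isLinearODESol_mulVec hτ w) ht hvw hτ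
  simpa [(hΦ τ hτ).1] using this

lemma eq_mul_inv (h𝔸 : ContinuousOn 𝔸 (Icc a b)) (hΦ : IsFundamentalMatrix 𝔸 a b Φ)
    (ht : t ∈ Icc a b) (hτ : τ ∈ Icc a b) (hσ : σ ∈ Icc a b) :
    Φ t τ = Φ t σ * (Φ τ σ)⁻¹ := by
  refine ext_iff_mulVec.2 fun v => ?_
  rw [← mulVec_mulVec]
  refine (hΦ.isLinearODESol_mulVec hτ v).eqOn h𝔸 (hΦ.isLinearODESol_mulVec hσ _) hτ ?_ ht
  have hdet : IsUnit (Φ τ σ).det := (isUnit_iff_isUnit_det _).1 (hΦ.isUnit h𝔸 hτ hσ)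
  simp [(hΦ τ hτ).1, mulVec_mulVec, mul_nonsing_inv _ hdet]

lemma continuousOn_inv (h𝔸 : ContinuousOn 𝔸 (Icc a b)) (hΦ : IsFundamentalMatrix 𝔸 a b Φ)
    (hσ : σ ∈ Icc a b) : ContinuousOn (fun τ => (Φ τ σ)⁻¹) (Icc a b) := fun τ hτ => by
  have hdet : IsUnit (Φ τ σ).det := (isUnit_iff_isUnit_det _).1 (hΦ.isUnit h𝔸 hτ hσ)
  exact (continuousAt_matrix_inv _ (NormedRing.inverse_continuousAt hdet.unit)
    ).comp_continuousWithinAt (f := fun u => Φ u σ) (hΦ.continuousOn hσ τ hτ)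

lemma continuousOn_right (h𝔸 : ContinuousOn 𝔸 (Icc a b)) (hΦ : IsFundamentalMatrix 𝔸 a b Φ)
    (ht : t ∈ Icc a b) (hσ : σ ∈ Icc a b) : ContinuousOn (fun τ => Φ t τ) (Icc a b) :=
  ((continuous_const.matrix_mul continuous_id).comp_continuousOn
    (hΦ.continuousOn_inv h𝔸 hσ)).congr fun _ hτ => hΦ.eq_mul_inv h𝔸 ht hτ hσ

lemma isLinearODESol_variationOfConstants (h𝔸 : ContinuousOn 𝔸 (Icc a b))
    (hΦ : IsFundamentalMatrix 𝔸 a b Φ) (y₀ : ι → ℝ) :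
    IsLinearODESol 𝔸 f a b (variationOfConstants Φ f a y₀) := fun t ht => by
  have ha : a ∈ Icc a b := ⟨le_rfl, ht.1.trans ht.2⟩
  have hg : ContinuousOn (fun τ => (Φ τ a)⁻¹ *ᵥ f) (Icc a b) :=
    (continuous_id.matrix_mulVec continuous_const).comp_continuousOn (hΦ.continuousOn_inv h𝔸 ha)
  -- the `FTCFilter` instance for `𝓝[Icc a b] t` is found through this `Fact`
  have : Fact (t ∈ Icc a b) := ⟨ht⟩
  have hint : HasDerivWithinAt (fun u => ∫ τ in a..u, (Φ τ a)⁻¹ *ᵥ f) ((Φ t a)⁻¹ *ᵥ f)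
      (Icc a b) t :=
    intervalIntegral.integral_hasDerivWithinAt_right
      ((hg.mono (uIcc_subset_Icc ha ht)).intervalIntegrable)
      (hg.stronglyMeasurableAtFilter_nhdsWithin measurableSet_Icc t) (hg t ht)
  have hdet : IsUnit (Φ t a).det := (isUnit_iff_isUnit_det _).1 (hΦ.isUnit h𝔸 ht ha)
  unfold variationOfConstants
  convert Matrix.hasDerivWithinAt_mulVec ((hΦ a ha).2 t ht) (hint.const_add y₀) using 1
  rw [← mulVec_mulVec, mulVec_mulVec f, mul_nonsing_inv _ hdet, one_mulVec]

lemma variationOfConstants_left (hΦ : IsFundamentalMatrix 𝔸 a b Φ) (hab : a ≤ b) (y₀ : ι → ℝ) :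
    variationOfConstants Φ f a y₀ a = y₀ := by
  simp [variationOfConstants, (hΦ a ⟨le_rfl, hab⟩).1]

lemma variationOfConstants_right (h𝔸 : ContinuousOn 𝔸 (Icc a b))
    (hΦ : IsFundamentalMatrix 𝔸 a b Φ) (hab : a ≤ b) (y₀ : ι → ℝ) :
    variationOfConstants Φ f a y₀ b = Φ b a *ᵥ y₀ + ∫ τ in a..b, Φ b τ *ᵥ f := by
  have ha : a ∈ Icc a b := ⟨le_rfl, hab⟩
  have hb : b ∈ Icc a b := ⟨hab, le_rfl⟩
  have hg : ContinuousOn (fun τ => (Φ τ a)⁻¹ *ᵥ f) (Icc a b) :=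
    (continuous_id.matrix_mulVec continuous_const).comp_continuousOn (hΦ.continuousOn_inv h𝔸 ha)
  let L := (mulVecLin (Φ b a)).toContinuousLinearMap
  rw [variationOfConstants, mulVec_add]
  congr 1
  calc Φ b a *ᵥ ∫ τ in a..b, (Φ τ a)⁻¹ *ᵥ f = L (∫ τ in a..b, (Φ τ a)⁻¹ *ᵥ f) := rfl
    _ = ∫ τ in a..b, L ((Φ τ a)⁻¹ *ᵥ f) :=
        (L.intervalIntegral_comp_comm (hg.intervalIntegrable_of_Icc hab)).symm
    _ = ∫ τ in a..b, Φ b τ *ᵥ f := intervalIntegral.integral_congr fun τ hτ => by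
        rw [uIcc_of_le hab] at hτ
        simp [L, hΦ.eq_mul_inv h𝔸 hb hτ ha, mulVec_mulVec]

theorem exists_isLinearODESol_iff (h𝔸 : ContinuousOn 𝔸 (Icc a b))
    (hΦ : IsFundamentalMatrix 𝔸 a b Φ) (hab : a ≤ b) (P : (ι → ℝ) → (ι → ℝ) → Prop) :
    (∃ y, IsLinearODESol 𝔸 f a b y ∧ P (y a) (y b)) ↔
      ∃ y₀, P y₀ (Φ b a *ᵥ y₀ + ∫ τ in a..b, Φ b τ *ᵥ f) := by
  constructor
  · rintro ⟨y, hy, hP⟩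
    have hyb : y b = variationOfConstants Φ f a (y a) b :=
      hy.eqOn h𝔸 (hΦ.isLinearODESol_variationOfConstants h𝔸 (y a)) ⟨le_rfl, hab⟩
        (hΦ.variationOfConstants_left hab _).symm ⟨hab, le_rfl⟩
    exact ⟨y a, by rwa [hyb, hΦ.variationOfConstants_right h𝔸 hab] at hP⟩
  · rintro ⟨y₀, hP⟩
    refine ⟨_, hΦ.isLinearODESol_variationOfConstants h𝔸 y₀, ?_⟩
    rwa [hΦ.variationOfConstants_left hab, hΦ.variationOfConstants_right h𝔸 hab]

end IsFundamentalMatrix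

end LinearODE

lemma Matrix.fromCols_one_mul {k m l₁ l₂ α : Type*} [Fintype k] [Fintype m] [DecidableEq k]
    [Semiring α] (C : Matrix k m α) (P : Matrix (m ⊕ k) (l₁ ⊕ l₂) α) :
    fromCols C (1 : Matrix k k α) * P =
      fromCols (P.toBlocks₂₁ + C * P.toBlocks₁₁) (P.toBlocks₂₂ + C * P.toBlocks₁₂) := by
  conv_lhs => rw [← fromBlocks_toBlocks P, fromCols_mul_fromBlocks]
  rw [Matrix.one_mul, Matrix.one_mul, add_comm, add_comm (C * _)]

lemma IsLam1Sol.continuousOn {n n1 : ℕ} {A Q Qf : Matrix (Fin n) (Fin n) ℝ}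
    {B : Matrix (Fin n) (Fin n1) ℝ} {R : Matrix (Fin n1) (Fin n1) ℝ} {T : ℝ}
    {Λ1 : ℝ → Matrix (Fin n) (Fin n) ℝ} (h : IsLam1Sol n n1 A Q Qf B R T Λ1) :
    ContinuousOn Λ1 (Icc 0 T) := fun t ht =>
  continuousWithinAt_pi.2 fun r => continuousWithinAt_pi.2 fun c =>
    (h.1 t ht r c).continuousWithinAt

section TPBV

variable {n n1 : ℕ} {A G Q Γ : Matrix (Fin n) (Fin n) ℝ} {B : Matrix (Fin n) (Fin n1) ℝ}
  {R : Matrix (Fin n1) (Fin n1) ℝ}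

lemma continuous_bbA : Continuous (bbA n n1 A G Q Γ B R) := by
  unfold bbA
  fun_prop

lemma bbA_mulVec_sumElim_add (L : Matrix (Fin n) (Fin n) ℝ) (η x s : Fin n → ℝ) :
    bbA n n1 A G Q Γ B R L *ᵥ Sum.elim x s + Sum.elim (0 : Fin n → ℝ) (Q *ᵥ η) =
      Sum.elim ((A - Mmat n n1 B R * L + G) *ᵥ x - Mmat n n1 B R *ᵥ s)
        (-((Aᵀ - L * Mmat n n1 B R) *ᵥ s) - (L * G) *ᵥ x + Q *ᵥ (Γ *ᵥ x + η)) := by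
  rw [bbA, fromBlocks_mulVec, ← Sum.elim_add_add]
  congr 1
  · simp [neg_mulVec, sub_eq_add_neg]
  · simp only [Sum.elim_comp_inl, Sum.elim_comp_inr, sub_mulVec, add_mulVec, neg_mulVec,
      mulVec_add, ← mulVec_mulVec]
    abel

lemma isTPBVSol_iff {Qf Γf : Matrix (Fin n) (Fin n) ℝ} {η ηf x0 : Fin n → ℝ} {T : ℝ}
    {Λ1 : ℝ → Matrix (Fin n) (Fin n) ℝ} {y : ℝ → Fin n ⊕ Fin n → ℝ} :
    IsTPBVSol n n1 A G Q Qf Γ Γf B R η ηf x0 T Λ1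
        (fun t => y t ∘ Sum.inl) (fun t => y t ∘ Sum.inr) ↔
      IsLinearODESol (fun t => bbA n n1 A G Q Γ B R (Λ1 t)) (Sum.elim (0 : Fin n → ℝ) (Q *ᵥ η))
          0 T y ∧
        y 0 ∘ Sum.inl = x0 ∧
        fromCols (Qf * Γf) (1 : Matrix (Fin n) (Fin n) ℝ) *ᵥ y T + Qf *ᵥ ηf = 0 := by
  have hderiv : ∀ t, HasDerivWithinAt y (bbA n n1 A G Q Γ B R (Λ1 t) *ᵥ y t +
      Sum.elim (0 : Fin n → ℝ) (Q *ᵥ η)) (Icc 0 T) t ↔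
      (∀ j, HasDerivWithinAt (fun u => (y u ∘ Sum.inl) j) (((A - Mmat n n1 B R * Λ1 t + G) *ᵥ
        (y t ∘ Sum.inl) - Mmat n n1 B R *ᵥ (y t ∘ Sum.inr)) j) (Icc 0 T) t) ∧
      (∀ j, HasDerivWithinAt (fun u => (y u ∘ Sum.inr) j) ((-((Aᵀ - Λ1 t * Mmat n n1 B R) *ᵥ
        (y t ∘ Sum.inr)) - (Λ1 t * G) *ᵥ (y t ∘ Sum.inl) +
          Q *ᵥ (Γ *ᵥ (y t ∘ Sum.inl) + η)) j) (Icc 0 T) t) := fun t => by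
    rw [hasDerivWithinAt_pi, Sum.forall, ← Sum.elim_comp_inl_inr (y t), bbA_mulVec_sumElim_add]
    rfl
  have hterm : ∀ v : Fin n ⊕ Fin n → ℝ, v ∘ Sum.inr = -(Qf *ᵥ (Γf *ᵥ (v ∘ Sum.inl) + ηf)) ↔
      fromCols (Qf * Γf) (1 : Matrix (Fin n) (Fin n) ℝ) *ᵥ v + Qf *ᵥ ηf = 0 := fun v => by
    rw [eq_neg_iff_add_eq_zero, fromCols_mulVec, one_mulVec, mulVec_add, mulVec_mulVec,
      add_left_comm, ← add_assoc]
  simp only [IsTPBVSol, IsLinearODESol, hderiv, forall_and, hterm, and_assoc]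

lemma Z1mat_mulVec_add_Z2vec {Qf Γf : Matrix (Fin n) (Fin n) ℝ} {η ηf x0 : Fin n → ℝ} {T : ℝ}
    {Φ : ℝ → ℝ → Matrix (Fin n ⊕ Fin n) (Fin n ⊕ Fin n) ℝ}
    (hΦ : IntervalIntegrable (fun τ => Φ T τ *ᵥ Sum.elim (0 : Fin n → ℝ) (Q *ᵥ η)) volume 0 T)
    (w : Fin n → ℝ) :
    Z1mat n Qf Γf T Φ *ᵥ w + Z2vec n Q Qf Γf η ηf x0 T Φ =
      fromCols (Qf * Γf) (1 : Matrix (Fin n) (Fin n) ℝ) *ᵥ (Φ T 0 *ᵥ Sum.elim x0 w +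
        ∫ τ in (0 : ℝ)..T, Φ T τ *ᵥ Sum.elim (0 : Fin n → ℝ) (Q *ᵥ η)) + Qf *ᵥ ηf := by
  set E := fromCols (Qf * Γf) (1 : Matrix (Fin n) (Fin n) ℝ)
  have hblock : ∀ (P : Matrix (Fin n ⊕ Fin n) (Fin n ⊕ Fin n) ℝ) x w,
      E *ᵥ (P *ᵥ Sum.elim x w) = (P.toBlocks₂₁ + Qf * Γf * P.toBlocks₁₁) *ᵥ x +
        (P.toBlocks₂₂ + Qf * Γf * P.toBlocks₁₂) *ᵥ w :=
    fun P x w => by rw [mulVec_mulVec, fromCols_one_mul, fromCols_mulVec_sumElim]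
  ext j
  let L : (Fin n ⊕ Fin n → ℝ) →L[ℝ] ℝ :=
    (ContinuousLinearMap.proj j).comp (mulVecLin E).toContinuousLinearMap
  have hint : (E *ᵥ ∫ τ in (0 : ℝ)..T, Φ T τ *ᵥ Sum.elim (0 : Fin n → ℝ) (Q *ᵥ η)) j =
      ∫ τ in (0 : ℝ)..T, (((Φ T τ).toBlocks₂₂ + Qf * Γf * (Φ T τ).toBlocks₁₂) *ᵥ (Q *ᵥ η)) j :=
    calc _ = L (∫ τ in (0 : ℝ)..T, Φ T τ *ᵥ Sum.elim (0 : Fin n → ℝ) (Q *ᵥ η)) := rfl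
      _ = ∫ τ in (0 : ℝ)..T, L (Φ T τ *ᵥ Sum.elim (0 : Fin n → ℝ) (Q *ᵥ η)) :=
          (L.intervalIntegral_comp_comm hΦ).symm
      _ = _ := by simp [L, hblock]
  simp only [Z1mat, Z2vec, mulVec_add, hblock, Pi.add_apply, hint]
  ring

end TPBV

theorem tpbv_solvable_iff_Z2_in_range_Z1_general
    (n n1 : ℕ) (T : ℝ) (hT : 0 < T)
    (A G Q Qf Γ Γf : Matrix (Fin n) (Fin n) ℝ)
    (B : Matrix (Fin n) (Fin n1) ℝ) (R : Matrix (Fin n1) (Fin n1) ℝ)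
    (η ηf x0 : Fin n → ℝ)
    (Λ1 : ℝ → Matrix (Fin n) (Fin n) ℝ)
    (hΛ1 : IsLam1Sol n n1 A Q Qf B R T Λ1)
    (Φ : ℝ → ℝ → Matrix (Fin n ⊕ Fin n) (Fin n ⊕ Fin n) ℝ)
    (hΦ : IsFundSol n n1 A G Q Γ B R T Λ1 Φ) :
    (∃ X s : ℝ → Fin n → ℝ, IsTPBVSol n n1 A G Q Qf Γ Γf B R η ηf x0 T Λ1 X s)
    ↔ (∃ w : Fin n → ℝ, Z1mat n Qf Γf T Φ *ᵥ w = Z2vec n Q Qf Γf η ηf x0 T Φ) := by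
  set E := fromCols (Qf * Γf) (1 : Matrix (Fin n) (Fin n) ℝ)
  set f := Sum.elim (0 : Fin n → ℝ) (Q *ᵥ η)
  have h𝔸 : ContinuousOn (fun t => bbA n n1 A G Q Γ B R (Λ1 t)) (Icc 0 T) :=
    continuous_bbA.comp_continuousOn hΛ1.continuousOn
  have hΦ' : IsFundamentalMatrix (fun t => bbA n n1 A G Q Γ B R (Λ1 t)) 0 T Φ := hΦ
  have hint : IntervalIntegrable (fun τ => Φ T τ *ᵥ f) volume 0 T :=
    ((continuous_id.matrix_mulVec continuous_const).comp_continuousOn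
      (hΦ'.continuousOn_right h𝔸 ⟨hT.le, le_rfl⟩ ⟨le_rfl, hT.le⟩)).intervalIntegrable_of_Icc hT.le
  calc (∃ X s, IsTPBVSol n n1 A G Q Qf Γ Γf B R η ηf x0 T Λ1 X s)
      ↔ ∃ y : ℝ → Fin n ⊕ Fin n → ℝ, IsTPBVSol n n1 A G Q Qf Γ Γf B R η ηf x0 T Λ1
          (fun t => y t ∘ Sum.inl) (fun t => y t ∘ Sum.inr) :=
        ⟨fun ⟨X, s, h⟩ => ⟨fun t => Sum.elim (X t) (s t), h⟩, fun ⟨_, h⟩ => ⟨_, _, h⟩⟩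
    _ ↔ ∃ y, IsLinearODESol (fun t => bbA n n1 A G Q Γ B R (Λ1 t)) f 0 T y ∧
          (y 0 ∘ Sum.inl = x0 ∧ E *ᵥ y T + Qf *ᵥ ηf = 0) :=
        exists_congr fun _ => isTPBVSol_iff
    _ ↔ ∃ y₀ : Fin n ⊕ Fin n → ℝ, y₀ ∘ Sum.inl = x0 ∧
          E *ᵥ (Φ T 0 *ᵥ y₀ + ∫ τ in (0 : ℝ)..T, Φ T τ *ᵥ f) + Qf *ᵥ ηf = 0 :=
        hΦ'.exists_isLinearODESol_iff h𝔸 hT.le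
          fun y₀ yT => y₀ ∘ Sum.inl = x0 ∧ E *ᵥ yT + Qf *ᵥ ηf = 0
    _ ↔ ∃ w, Z1mat n Qf Γf T Φ *ᵥ w + Z2vec n Q Qf Γf η ηf x0 T Φ = 0 := by
        simp only [Z1mat_mulVec_add_Z2vec hint]
        exact ⟨fun ⟨y₀, hy₀, h⟩ => ⟨y₀ ∘ Sum.inr, by rwa [← hy₀, Sum.elim_comp_inl_inr]⟩,
          fun ⟨w, h⟩ => ⟨Sum.elim x0 w, rfl, h⟩⟩
    _ ↔ ∃ w, Z1mat n Qf Γf T Φ *ᵥ w = Z2vec n Q Qf Γf η ηf x0 T Φ :=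
        ⟨fun ⟨w, h⟩ => ⟨-w, by rwa [mulVec_neg, neg_eq_iff_add_eq_zero]⟩,
          fun ⟨w, h⟩ => ⟨-w, by rw [mulVec_neg, h, neg_add_cancel]⟩⟩

/-- The MFG TPBV problem has a solution on `[0,T]` if and only if
`Z₂` lies in the column space (range) of `Z₁`. -/
theorem tpbv_solvable_iff_Z2_in_range_Z1
    (n n1 : ℕ) (hn : 0 < n) (hn1 : 0 < n1) (T : ℝ) (hT : 0 < T)
    (A G Q Qf Γ Γf : Matrix (Fin n) (Fin n) ℝ)
    (B : Matrix (Fin n) (Fin n1) ℝ) (R : Matrix (Fin n1) (Fin n1) ℝ)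
    (η ηf x0 : Fin n → ℝ)
    (hQ : Q.PosSemidef) (hQf : Qf.PosSemidef) (hR : R.PosDef)
    (Λ1 : ℝ → Matrix (Fin n) (Fin n) ℝ)
    (hΛ1 : IsLam1Sol n n1 A Q Qf B R T Λ1)
    (Φ : ℝ → ℝ → Matrix (Fin n ⊕ Fin n) (Fin n ⊕ Fin n) ℝ)
    (hΦ : IsFundSol n n1 A G Q Γ B R T Λ1 Φ) :
    (∃ X s : ℝ → Fin n → ℝ, IsTPBVSol n n1 A G Q Qf Γ Γf B R η ηf x0 T Λ1 X s)
    ↔ (∃ w : Fin n → ℝ, Z1mat n Qf Γf T Φ *ᵥ w = Z2vec n Q Qf Γf η ηf x0 T Φ) :=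
  tpbv_solvable_iff_Z2_in_range_Z1_general n n1 T hT A G Q Qf Γ Γf B R η ηf x0 Λ1 hΛ1 Φ hΦ
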